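/- Consider the recurrence δ_t = −1/(ρ + δ_{t−1}) with δ_0 = 0 and ρ = (1+r)/√r for some r with 0 < r < 1. Then the sequence (δ_t) converges, and its limit δ_∞ satisfies δ_∞ = −1/(ρ + δ_∞); moreover δ_∞ = −√r (the root of δ² + ρδ + 1 = 0 with |δ| < 1). -/

import Mathlib

/-!
Write `s = √r ∈ (0, 1)`, so that `ρ = s + s⁻¹` and `-s` is a fixed point of `x ↦ -1 / (ρ + x)`.
The error `x + s` satisfies `(-1 / (ρ + x)) + s = s (x + s) / (ρ + x)`; as long as `x > -s` the
denominator exceeds `s⁻¹`, so the error stays positive and shrinks by a factor `s² < 1` per step.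
-/

open Filter Topology

namespace MomentumRecurrence

variable {s : ℝ}

theorem neg_one_div_add_add_eq (hs : s ≠ 0) {x : ℝ} (hx : s + s⁻¹ + x ≠ 0) :
    -1 / (s + s⁻¹ + x) + s = s * (x + s) / (s + s⁻¹ + x) := by
  rw [div_add' _ _ _ hx]
  congr 1
  field_simp
  ring

theorem neg_one_div_add_add_pos (hs : 0 < s) {x : ℝ} (hx : -s < x) :
    0 < -1 / (s + s⁻¹ + x) + s := by
  have hden : 0 < s + s⁻¹ + x := by have := inv_pos.2 hs; linarith
  rw [neg_one_div_add_add_eq hs.ne' hden.ne']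
  exact div_pos (mul_pos hs (by linarith)) hden

theorem neg_one_div_add_add_le (hs : 0 < s) {x : ℝ} (hx : -s < x) :
    -1 / (s + s⁻¹ + x) + s ≤ s ^ 2 * (x + s) := by
  have hden : s⁻¹ < s + s⁻¹ + x := by linarith
  have hpos := (inv_pos.2 hs).trans hden
  rw [neg_one_div_add_add_eq hs.ne' hpos.ne', div_le_iff₀ hpos]
  calc s * (x + s) = s ^ 2 * (x + s) * s⁻¹ := by field_simp
    _ ≤ s ^ 2 * (x + s) * (s + s⁻¹ + x) := by gcongr; nlinarith

theorem add_pos_and_add_le_pow_mul {δ : ℕ → ℝ} (hs : 0 < s) (hδ0 : -s < δ 0)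
    (hδ : ∀ t, δ (t + 1) = -1 / (s + s⁻¹ + δ t)) (t : ℕ) :
    0 < δ t + s ∧ δ t + s ≤ (s ^ 2) ^ t * (δ 0 + s) := by
  induction t with
  | zero => exact ⟨by linarith, by simp⟩
  | succ t ih =>
    have hgt : -s < δ t := by linarith [ih.1]
    rw [hδ t, pow_succ, mul_comm _ (s ^ 2), mul_assoc]
    exact ⟨neg_one_div_add_add_pos hs hgt,
      (neg_one_div_add_add_le hs hgt).trans (by gcongr; exact ih.2)⟩

theorem tendsto_neg_of_neg_lt {δ : ℕ → ℝ} (hs : 0 < s) (hs1 : s < 1) (hδ0 : -s < δ 0)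
    (hδ : ∀ t, δ (t + 1) = -1 / (s + s⁻¹ + δ t)) :
    Tendsto δ atTop (𝓝 (-s)) := by
  have hgeom : Tendsto (fun t : ℕ ↦ (s ^ 2) ^ t * (δ 0 + s)) atTop (𝓝 0) := by
    simpa using (tendsto_pow_atTop_nhds_zero_of_lt_one (by positivity)
      (by nlinarith : s ^ 2 < 1)).mul_const (δ 0 + s)
  have herr : Tendsto (fun t ↦ δ t + s) atTop (𝓝 0) :=
    squeeze_zero (fun t ↦ (add_pos_and_add_le_pow_mul hs hδ0 hδ t).1.le)
      (fun t ↦ (add_pos_and_add_le_pow_mul hs hδ0 hδ t).2) hgeom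
  simpa using herr.sub_const s

end MomentumRecurrence

open MomentumRecurrence in
theorem stmt_13 (r : ℝ) (hr0 : 0 < r) (hr1 : r < 1)
    (ρ : ℝ) (hρ : ρ = (1 + r) / Real.sqrt r)
    (δ : ℕ → ℝ) (hδ0 : δ 0 = 0)
    (hδ : ∀ t, δ (t + 1) = -1 / (ρ + δ t)) :
    Tendsto δ atTop (nhds (-Real.sqrt r)) ∧
      -Real.sqrt r = -1 / (ρ + -Real.sqrt r) ∧
      (-Real.sqrt r) ^ 2 + ρ * (-Real.sqrt r) + 1 = 0 ∧
      |(-Real.sqrt r : ℝ)| < 1 := by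
  set s := Real.sqrt r
  have hs : 0 < s := Real.sqrt_pos.2 hr0
  have hs1 : s < 1 := (Real.sqrt_lt' one_pos).2 (by simpa using hr1)
  have hρs : ρ = s + s⁻¹ := by
    rw [hρ, ← Real.sq_sqrt hr0.le]
    field_simp
    ring
  subst hρs
  refine ⟨tendsto_neg_of_neg_lt hs hs1 (by rw [hδ0]; linarith) hδ, ?_, ?_, ?_⟩
  · field_simp
    ring
  · field_simp
    ring
  · rwa [abs_neg, abs_of_pos hs]
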